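/- arXiv:2202.03362 — 3 statements merged into one kernel-verified Lean document; each statement's English description precedes it below -/
import Mathlib

section
/- There exists an absolute constant L > 0 such that for all ω = (α⁺, α⁻, γ₁, δ) ∈ Ω̂, all ω̃ = (α̃⁺, α̃⁻, γ̃₁, δ̃) ∈ Ω̂, and all z ∈ ℂ: |E_ω(z) − E_{ω̃}(z)| ≤ e^{|γ₁||z| + 5δ|z|²} (e^{|γ₁ − γ̃₁||z| + (|δ − δ̃|/2)|z|²} − 1) + |z| (∑_{i=1}^∞ [|α_i⁺ − α̃_i⁺|³ + |α_i⁻ − α̃_i⁻|³])^{1/3} e^{|γ̃₁||z| + (δ̃/2)|z|² + L(|z|(δ^{1/2} + δ̃^{1/2}) + 1)³}. -/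
/-!
Write `E_ω(z) = e^{-γ₁ z - δ z²/2} ∏ⱼ E₂(z αⱼ)`, where `αⱼ` runs over the `αᵢ⁺` and the `-αᵢ⁻`
and `E₂(w) = (1 - w) e^{w + w²/2}` is the Weierstrass factor of genus 2: each factor of `E_ω` is
`e^{w} (1 - w) = e^{-w²/2} E₂(w)`, and the `e^{-z² αⱼ²/2}` combine with `e^{-γ₂ z²/2}` into
`e^{-δ z²/2}` because `γ₂ = δ - Σ αⱼ²`.

Since `|E₂(w)| ≤ e^{|w|²}` and `E₂'(w) = -w² e^{w + w²/2}`, two partial products differ by at most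
`e^{T + 3T²/2} Σⱼ Mⱼ² |z| |αⱼ - α̃ⱼ|`, where `Mⱼ ≤ T = |z|(√δ + √δ̃)` bounds `|z αⱼ|` and
`|z α̃ⱼ|`. Hölder's inequality with exponents `3` and `3/2`, together with `Σ Mⱼ³ ≤ T³`, turns this
into `|z| ‖α - α̃‖₃ e^{(T + 1)³}`. The Gaussian prefactors are compared through
`|e^u - e^v| ≤ e^{|u|} (e^{|u - v|} - 1)`, and the bound passes to the limit, with `L = 1`.
-/

open Filter Topology Finset

/-- The parameter space Ω̂ of quadruples (α⁺, α⁻, γ₁, δ). -/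
structure OmegaHat where
  aP : ℕ → ℝ
  aM : ℕ → ℝ
  g1 : ℝ
  del : ℝ
  aP_nonneg : ∀ i, 0 ≤ aP i
  aM_nonneg : ∀ i, 0 ≤ aM i
  aP_antitone : Antitone aP
  aM_antitone : Antitone aM
  del_nonneg : 0 ≤ del
  summable_aP_sq : Summable fun i => aP i ^ 2
  summable_aM_sq : Summable fun i => aM i ^ 2
  sum_sq_le : (∑' i, aP i ^ 2) + (∑' i, aM i ^ 2) ≤ del

/-- γ₂ = δ − ∑ (α_i⁺)² − ∑ (α_i⁻)². -/
noncomputable def gamma2 (ω : OmegaHat) : ℝ :=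
  ω.del - (∑' i, ω.aP i ^ 2) - (∑' i, ω.aM i ^ 2)

/-- The Laguerre–Pólya function E_ω. -/
noncomputable def Eomega (ω : OmegaHat) (z : ℂ) : ℂ :=
  Complex.exp (-(ω.g1 : ℂ) * z - (gamma2 ω : ℂ) / 2 * z ^ 2) *
    (∏' i, (Complex.exp (z * (ω.aP i : ℂ)) * (1 - z * (ω.aP i : ℂ)))) *
    (∏' i, (Complex.exp (-(z * (ω.aM i : ℂ))) * (1 + z * (ω.aM i : ℂ))))

open scoped Complex Real

lemma norm_cexp_sub_cexp_le (u v : ℂ) : ‖cexp u - cexp v‖ ≤ rexp ‖u‖ * (rexp ‖u - v‖ - 1) := by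
  have hsplit : cexp u - cexp v = cexp u * -(cexp (v - u) - 1) := by
    rw [mul_neg, mul_sub, ← Complex.exp_add]; ring_nf
  have hexp : ‖cexp (v - u) - 1‖ ≤ rexp ‖v - u‖ - 1 := by
    simpa using Complex.norm_exp_sub_sum_le_exp_norm_sub_sum (v - u) 1
  rw [hsplit, norm_mul, norm_neg, norm_sub_rev u v]
  exact mul_le_mul (Complex.norm_exp_le_exp_norm u) hexp (norm_nonneg _) (Real.exp_nonneg _)

lemma norm_neg_mul_sub_div_two_mul_sq_le (a b : ℝ) (z : ℂ) :
    ‖-(a : ℂ) * z - (b : ℂ) / 2 * z ^ 2‖ ≤ |a| * ‖z‖ + |b| / 2 * ‖z‖ ^ 2 := by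
  refine (norm_sub_le _ _).trans_eq ?_
  rw [norm_mul, norm_mul, norm_neg, norm_div, norm_pow, Complex.norm_real, Complex.norm_real,
    Complex.norm_ofNat, Real.norm_eq_abs, Real.norm_eq_abs]

lemma summable_abs_sub_pow_three {ι : Type*} {x y : ι → ℝ} (hx : Summable fun i => x i ^ 2)
    (hy : Summable fun i => y i ^ 2) : Summable fun i => |x i - y i| ^ 3 := by
  have hsq : Summable fun i => (x i - y i) ^ 2 :=
    ((hx.add hy).mul_left 2).of_nonneg_of_le (fun _ => sq_nonneg _)
      fun i => by nlinarith [sq_nonneg (x i + y i)]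
  refine hsq.of_norm_bounded_eventually ?_
  filter_upwards [hsq.tendsto_cofinite_zero.eventually (eventually_le_nhds one_pos)] with i hi
  have hle : |x i - y i| ≤ 1 := by rwa [← sq_le_one_iff₀ (abs_nonneg _), sq_abs]
  rw [Real.norm_eq_abs, abs_pow, abs_abs, pow_succ, ← sq_abs (x i - y i)]
  exact mul_le_of_le_one_right (sq_nonneg _) hle

lemma Finset.norm_prod_sub_prod_le {ι R : Type*} [NormedCommRing R] [NormOneClass R] (s : Finset ι)
    {a b : ι → R} {C : ι → ℝ} (ha : ∀ i ∈ s, ‖a i‖ ≤ C i) (hb : ∀ i ∈ s, ‖b i‖ ≤ C i)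
    (hC : ∀ i ∈ s, 1 ≤ C i) :
    ‖∏ i ∈ s, a i - ∏ i ∈ s, b i‖ ≤ (∏ i ∈ s, C i) * ∑ i ∈ s, ‖a i - b i‖ := by
  classical
  induction s using Finset.induction_on with
  | empty => simp
  | insert j s hj ih =>
    simp only [Finset.forall_mem_insert] at ha hb hC
    rw [prod_insert hj, prod_insert hj, prod_insert hj, sum_insert hj]
    have hprod_b : ‖∏ i ∈ s, b i‖ ≤ ∏ i ∈ s, C i :=
      (Finset.norm_prod_le _ _).trans (prod_le_prod (fun _ _ => norm_nonneg _) hb.2)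
    have hprod_C : 1 ≤ ∏ i ∈ s, C i := Finset.one_le_prod hC.2
    have hdiff := ih ha.2 hb.2 hC.2
    calc ‖a j * ∏ i ∈ s, a i - b j * ∏ i ∈ s, b i‖
        = ‖a j * (∏ i ∈ s, a i - ∏ i ∈ s, b i) + (a j - b j) * ∏ i ∈ s, b i‖ := by ring_nf
      _ ≤ C j * ((∏ i ∈ s, C i) * ∑ i ∈ s, ‖a i - b i‖) + ‖a j - b j‖ * ∏ i ∈ s, C i := by
        refine (norm_add_le _ _).trans (add_le_add ?_ ?_)
        · exact (norm_mul_le _ _).trans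
            (mul_le_mul ha.1 hdiff (norm_nonneg _) (zero_le_one.trans hC.1))
        · exact (norm_mul_le _ _).trans (mul_le_mul_of_nonneg_left hprod_b (norm_nonneg _))
      _ ≤ (C j * ∏ i ∈ s, C i) * (‖a j - b j‖ + ∑ i ∈ s, ‖a i - b i‖) := by
        have : ‖a j - b j‖ * ∏ i ∈ s, C i ≤ ‖a j - b j‖ * (C j * ∏ i ∈ s, C i) :=
          mul_le_mul_of_nonneg_left (le_mul_of_one_le_left (by positivity) hC.1) (norm_nonneg _)
        linarith

lemma sum_mul_sq_le_of_sum_pow_three_le {ι : Type*} (s : Finset ι) {a b : ι → ℝ}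
    (ha : ∀ i ∈ s, 0 ≤ a i) (hb : ∀ i ∈ s, 0 ≤ b i) {B : ℝ} (hB : 0 ≤ B) (hsum : ∑ i ∈ s, b i ^ 3 ≤ B ^ 3) :
    ∑ i ∈ s, a i * b i ^ 2 ≤ (∑ i ∈ s, a i ^ 3) ^ (1 / 3 : ℝ) * B ^ 2 := by
  have hpq : Real.HolderConjugate 3 (3 / 2) := ⟨by norm_num, by norm_num, by norm_num⟩
  have holder := Real.inner_le_Lp_mul_Lq_of_nonneg s hpq ha (fun i hi => sq_nonneg (b i))
  have hcube : ∀ x : ℝ, x ^ (3 : ℝ) = x ^ 3 := fun x => by exact_mod_cast Real.rpow_natCast x 3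
  have hsq : ∀ i ∈ s, (b i ^ 2) ^ (3 / 2 : ℝ) = b i ^ 3 := fun i hi => by
    rw [← Real.rpow_natCast, ← Real.rpow_mul (hb i hi), ← Real.rpow_natCast]; norm_num
  simp only [hcube, sum_congr rfl hsq] at holder
  refine holder.trans (mul_le_mul_of_nonneg_left ?_ (Real.rpow_nonneg (sum_nonneg ?_) _))
  · calc (∑ i ∈ s, b i ^ 3) ^ (1 / (3 / 2) : ℝ) ≤ (B ^ 3) ^ (1 / (3 / 2) : ℝ) :=
          Real.rpow_le_rpow (sum_nonneg fun i hi => pow_nonneg (hb i hi) 3) hsum (by norm_num)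
      _ = B ^ 2 := by rw [← Real.rpow_natCast, ← Real.rpow_mul hB, ← Real.rpow_natCast]; norm_num
  · exact fun i hi => pow_nonneg (ha i hi) 3

noncomputable def weierstrassFactor₂ (w : ℂ) : ℂ := cexp (w + w ^ 2 / 2) * (1 - w)

lemma norm_cexp_mul_one_sub_le (w : ℂ) : ‖cexp w * (1 - w)‖ ≤ rexp (‖w‖ ^ 2 / 2) := by
  have hsq : ‖1 - w‖ ^ 2 = 1 - 2 * w.re + ‖w‖ ^ 2 := by
    simp only [Complex.sq_norm, Complex.normSq_apply, Complex.sub_re, Complex.one_re,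
      Complex.sub_im, Complex.one_im]
    ring
  have hnorm : ‖1 - w‖ ≤ rexp ((‖w‖ ^ 2 - 2 * w.re) / 2) := by
    refine (pow_le_pow_iff_left₀ (norm_nonneg _) (Real.exp_nonneg _) two_ne_zero).mp ?_
    rw [hsq, ← Real.exp_nat_mul, Nat.cast_ofNat, mul_div_cancel₀ _ two_ne_zero]
    linarith [Real.add_one_le_exp (‖w‖ ^ 2 - 2 * w.re)]
  calc ‖cexp w * (1 - w)‖ = rexp w.re * ‖1 - w‖ := by rw [norm_mul, Complex.norm_exp]
    _ ≤ rexp w.re * rexp ((‖w‖ ^ 2 - 2 * w.re) / 2) := by gcongr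
    _ = rexp (‖w‖ ^ 2 / 2) := by rw [← Real.exp_add]; ring_nf

lemma weierstrassFactor₂_eq (w : ℂ) :
    weierstrassFactor₂ w = cexp (w ^ 2 / 2) * (cexp w * (1 - w)) := by
  rw [weierstrassFactor₂, ← mul_assoc, ← Complex.exp_add, add_comm]

lemma norm_weierstrassFactor₂_le (w : ℂ) : ‖weierstrassFactor₂ w‖ ≤ rexp (‖w‖ ^ 2) := by
  have hexp : ‖cexp (w ^ 2 / 2)‖ ≤ rexp (‖w‖ ^ 2 / 2) := by
    refine (Complex.norm_exp_le_exp_norm _).trans (Real.exp_le_exp.2 (le_of_eq ?_))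
    simp [norm_pow]
  calc ‖weierstrassFactor₂ w‖ ≤ rexp (‖w‖ ^ 2 / 2) * rexp (‖w‖ ^ 2 / 2) := by
        rw [weierstrassFactor₂_eq, norm_mul]
        gcongr
        exact norm_cexp_mul_one_sub_le w
    _ = rexp (‖w‖ ^ 2) := by rw [← Real.exp_add]; ring_nf

lemma hasDerivAt_weierstrassFactor₂ (w : ℂ) :
    HasDerivAt weierstrassFactor₂ (-w ^ 2 * cexp (w + w ^ 2 / 2)) w := by
  have hpoly : HasDerivAt (fun w : ℂ => w + w ^ 2 / 2) (1 + w) w :=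
    ((hasDerivAt_id' w).add ((hasDerivAt_pow 2 w).div_const 2)).congr_deriv (by push_cast; ring)
  exact (hpoly.cexp.mul ((hasDerivAt_id' w).const_sub 1)).congr_deriv (by ring)

lemma norm_weierstrassFactor₂_sub_le {M : ℝ} {a b : ℂ} (ha : ‖a‖ ≤ M) (hb : ‖b‖ ≤ M) :
    ‖weierstrassFactor₂ a - weierstrassFactor₂ b‖ ≤ M ^ 2 * rexp (M + M ^ 2 / 2) * ‖a - b‖ := by
  have hM : 0 ≤ M := (norm_nonneg a).trans ha
  refine (convex_closedBall (0 : ℂ) M).norm_image_sub_le_of_norm_hasDerivWithin_le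
    (fun x _ => (hasDerivAt_weierstrassFactor₂ x).hasDerivWithinAt) (fun x hx => ?_)
    (by simpa using hb) (by simpa using ha)
  have hx : ‖x‖ ≤ M := by simpa using hx
  rw [norm_mul, norm_neg, norm_pow]
  gcongr
  refine (Complex.norm_exp_le_exp_norm _).trans (Real.exp_le_exp.2 ?_)
  calc ‖x + x ^ 2 / 2‖ ≤ ‖x‖ + ‖x‖ ^ 2 / 2 := by
        refine (norm_add_le _ _).trans_eq ?_
        rw [norm_div, norm_pow, Complex.norm_ofNat]
    _ ≤ M + M ^ 2 / 2 := by gcongr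

lemma multipliable_weierstrassFactor₂ {ι : Type*} {w : ι → ℂ}
    (hw : Summable fun i => ‖w i‖ ^ 2) : Multipliable fun i => weierstrassFactor₂ (w i) := by
  have hsmall : ∀ᶠ i in cofinite, ‖w i‖ ≤ 1 := by
    filter_upwards [hw.tendsto_cofinite_zero.eventually (eventually_le_nhds one_pos)] with i hi
    exact (sq_le_one_iff₀ (norm_nonneg _)).mp hi
  have hbound : ∀ᶠ i in cofinite,
      ‖weierstrassFactor₂ (w i) - 1‖ ≤ rexp (3 / 2) * ‖w i‖ ^ 2 := by
    filter_upwards [hsmall] with i hi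
    have h := norm_weierstrassFactor₂_sub_le le_rfl (by simp : ‖(0 : ℂ)‖ ≤ ‖w i‖)
    have hexp : rexp (‖w i‖ + ‖w i‖ ^ 2 / 2) ≤ rexp (3 / 2) :=
      Real.exp_le_exp.2 (by nlinarith [mul_le_mul hi hi (norm_nonneg _) zero_le_one])
    calc ‖weierstrassFactor₂ (w i) - 1‖
        ≤ ‖w i‖ ^ 2 * rexp (‖w i‖ + ‖w i‖ ^ 2 / 2) * ‖w i‖ := by simpa [weierstrassFactor₂] using h
      _ ≤ ‖w i‖ ^ 2 * rexp (3 / 2) * 1 := by gcongr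
      _ = rexp (3 / 2) * ‖w i‖ ^ 2 := by ring
  have hsum : Summable fun i => ‖weierstrassFactor₂ (w i) - 1‖ :=
    (hw.mul_left (rexp (3 / 2))).of_norm_bounded_eventually (by simpa only [norm_norm] using hbound)
  simpa using multipliable_one_add_of_summable hsum

lemma multipliable_weierstrassFactor₂_mul {ι : Type*} (z : ℂ) {a : ι → ℝ}
    (ha : Summable fun i => a i ^ 2) : Multipliable fun i => weierstrassFactor₂ (z * a i) :=
  multipliable_weierstrassFactor₂ (by simpa [mul_pow] using ha.mul_left (‖z‖ ^ 2))

lemma hasProd_cexp_mul_one_sub {ι : Type*} (z : ℂ) {a : ι → ℝ} (ha : Summable fun i => a i ^ 2) :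
    HasProd (fun i => cexp (z * a i) * (1 - z * a i))
      (cexp (-(z ^ 2 / 2 * ↑(∑' i, a i ^ 2))) * ∏' i, weierstrassFactor₂ (z * a i)) := by
  have hsum : HasSum (fun i => -((z * a i) ^ 2 / 2)) (-(z ^ 2 / 2 * ↑(∑' i, a i ^ 2))) := by
    refine ((Complex.hasSum_ofReal.mpr ha.hasSum).mul_left (z ^ 2 / 2)).neg.congr_fun fun i => ?_
    push_cast; ring
  refine (hsum.cexp.mul (multipliable_weierstrassFactor₂_mul z ha).hasProd).congr_fun fun i => ?_
  simp only [Function.comp_apply, weierstrassFactor₂_eq, ← mul_assoc, ← Complex.exp_add]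
  ring_nf

lemma norm_prod_weierstrassFactor₂_le {ι : Type*} (s : Finset ι) (w : ι → ℂ) :
    ‖∏ i ∈ s, weierstrassFactor₂ (w i)‖ ≤ rexp (∑ i ∈ s, ‖w i‖ ^ 2) := by
  rw [Real.exp_sum]
  exact (Finset.norm_prod_le _ _).trans
    (prod_le_prod (fun _ _ => norm_nonneg _) fun i _ => norm_weierstrassFactor₂_le (w i))

section PairOfSequences

variable {ι : Type*} {s : Finset ι} {w w' : ι → ℂ} {T : ℝ}

lemma max_norm_sq_le (i : ι) : max ‖w i‖ ‖w' i‖ ^ 2 ≤ ‖w i‖ ^ 2 + ‖w' i‖ ^ 2 := by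
  rcases max_cases ‖w i‖ ‖w' i‖ with ⟨h, -⟩ | ⟨h, -⟩ <;> rw [h] <;> nlinarith

lemma max_norm_le_of_sum_sq_le (hT : 0 ≤ T) (hsum : ∑ i ∈ s, (‖w i‖ ^ 2 + ‖w' i‖ ^ 2) ≤ T ^ 2)
    {i : ι} (hi : i ∈ s) : max ‖w i‖ ‖w' i‖ ≤ T := by
  refine (pow_le_pow_iff_left₀ (by positivity) hT two_ne_zero).mp (max_norm_sq_le i |>.trans ?_)
  exact (single_le_sum (f := fun i => ‖w i‖ ^ 2 + ‖w' i‖ ^ 2) (fun _ _ => by positivity) hi).trans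
    hsum

lemma sum_max_norm_pow_three_le (hT : 0 ≤ T)
    (hsum : ∑ i ∈ s, (‖w i‖ ^ 2 + ‖w' i‖ ^ 2) ≤ T ^ 2) :
    ∑ i ∈ s, max ‖w i‖ ‖w' i‖ ^ 3 ≤ T ^ 3 := calc
  _ ≤ ∑ i ∈ s, T * (‖w i‖ ^ 2 + ‖w' i‖ ^ 2) := sum_le_sum fun i hi => by
    rw [pow_succ']
    exact mul_le_mul (max_norm_le_of_sum_sq_le hT hsum hi) (max_norm_sq_le i) (by positivity) hT
  _ ≤ T ^ 3 := by rw [← mul_sum]; nlinarith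

lemma norm_prod_weierstrassFactor₂_sub_le_sum (hT : 0 ≤ T)
    (hsum : ∑ i ∈ s, (‖w i‖ ^ 2 + ‖w' i‖ ^ 2) ≤ T ^ 2) :
    ‖∏ i ∈ s, weierstrassFactor₂ (w i) - ∏ i ∈ s, weierstrassFactor₂ (w' i)‖ ≤
      rexp (T + 3 / 2 * T ^ 2) * ∑ i ∈ s, ‖w i - w' i‖ * max ‖w i‖ ‖w' i‖ ^ 2 := by
  have hfactor : ∀ i ∈ s, ‖weierstrassFactor₂ (w i) - weierstrassFactor₂ (w' i)‖ ≤
      rexp (T + T ^ 2 / 2) * (‖w i - w' i‖ * max ‖w i‖ ‖w' i‖ ^ 2) := fun i hi => by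
    have hM := max_norm_le_of_sum_sq_le hT hsum hi
    refine (norm_weierstrassFactor₂_sub_le (le_max_left _ _) (le_max_right _ _)).trans ?_
    calc _ ≤ max ‖w i‖ ‖w' i‖ ^ 2 * rexp (T + T ^ 2 / 2) * ‖w i - w' i‖ := by gcongr
      _ = _ := by ring
  have htelescope := Finset.norm_prod_sub_prod_le s
    (C := fun i => rexp (‖w i‖ ^ 2 + ‖w' i‖ ^ 2))
    (fun i _ => (norm_weierstrassFactor₂_le _).trans
      (Real.exp_le_exp.2 (le_add_of_nonneg_right (sq_nonneg _))))
    (fun i _ => (norm_weierstrassFactor₂_le _).trans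
      (Real.exp_le_exp.2 (le_add_of_nonneg_left (sq_nonneg _))))
    (fun i _ => Real.one_le_exp (by positivity))
  calc _ ≤ rexp (T ^ 2) * ∑ i ∈ s, rexp (T + T ^ 2 / 2) *
        (‖w i - w' i‖ * max ‖w i‖ ‖w' i‖ ^ 2) := by
        refine htelescope.trans ?_
        rw [← Real.exp_sum]
        gcongr with i hi
        exact hfactor i hi
    _ = _ := by rw [← mul_sum, ← mul_assoc, ← Real.exp_add]; ring_nf

end PairOfSequences

lemma norm_prod_weierstrassFactor₂_sub_le {ι : Type*} (s : Finset ι) (w w' : ι → ℂ) {T : ℝ}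
    (hT : 0 ≤ T) (hsum : ∑ i ∈ s, (‖w i‖ ^ 2 + ‖w' i‖ ^ 2) ≤ T ^ 2) :
    ‖∏ i ∈ s, weierstrassFactor₂ (w i) - ∏ i ∈ s, weierstrassFactor₂ (w' i)‖ ≤
      (∑ i ∈ s, ‖w i - w' i‖ ^ 3) ^ (1 / 3 : ℝ) * rexp ((T + 1) ^ 3) := by
  set D := (∑ i ∈ s, ‖w i - w' i‖ ^ 3) ^ (1 / 3 : ℝ)
  have hholder : ∑ i ∈ s, ‖w i - w' i‖ * max ‖w i‖ ‖w' i‖ ^ 2 ≤ D * T ^ 2 :=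
    sum_mul_sq_le_of_sum_pow_three_le s (fun _ _ => norm_nonneg _) (fun _ _ => by positivity) hT
      (sum_max_norm_pow_three_le hT hsum)
  have hD : 0 ≤ D := Real.rpow_nonneg (sum_nonneg fun _ _ => by positivity) _
  calc _ ≤ rexp (T + 3 / 2 * T ^ 2) * (D * T ^ 2) :=
        (norm_prod_weierstrassFactor₂_sub_le_sum hT hsum).trans (by gcongr)
    _ ≤ rexp (T + 3 / 2 * T ^ 2) * (D * rexp (T ^ 2)) := by
      gcongr
      linarith [Real.add_one_le_exp (T ^ 2)]
    _ = D * rexp (T + 5 / 2 * T ^ 2) := by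
      rw [mul_left_comm, ← Real.exp_add]
      ring_nf
    _ ≤ D * rexp ((T + 1) ^ 3) := by
      gcongr
      nlinarith [pow_nonneg hT 3]

namespace OmegaHat

/-- `αᵢ⁺` on `inl i` and `-αᵢ⁻` on `inr i`: the factor `e^{-z αᵢ⁻} (1 + z αᵢ⁻)` of `E_ω` is
`e^{z a} (1 - z a)` with `a = -αᵢ⁻`, so both products of `E_ω` become one product over `ℕ ⊕ ℕ`. -/
def signedAlpha (ω : OmegaHat) : ℕ ⊕ ℕ → ℝ := Sum.elim ω.aP fun i => -ω.aM i

noncomputable def gaussFactor (ω : OmegaHat) (z : ℂ) : ℂ :=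
  cexp (-(ω.g1 : ℂ) * z - (ω.del : ℂ) / 2 * z ^ 2)

noncomputable def partialE (ω : OmegaHat) (z : ℂ) (s : Finset (ℕ ⊕ ℕ)) : ℂ :=
  ω.gaussFactor z * ∏ j ∈ s, weierstrassFactor₂ (z * ω.signedAlpha j)

lemma summable_neg_aM_sq (ω : OmegaHat) : Summable fun i => (-ω.aM i) ^ 2 := by
  simpa using ω.summable_aM_sq

lemma summable_signedAlpha_sq (ω : OmegaHat) : Summable fun j => ω.signedAlpha j ^ 2 :=
  Summable.sum _ ω.summable_aP_sq ω.summable_neg_aM_sq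

lemma sum_signedAlpha_sq_le (ω : OmegaHat) (s : Finset (ℕ ⊕ ℕ)) :
    ∑ j ∈ s, ω.signedAlpha j ^ 2 ≤ ω.del := calc
  _ ≤ ∑' j, ω.signedAlpha j ^ 2 :=
    ω.summable_signedAlpha_sq.sum_le_tsum s fun _ _ => sq_nonneg _
  _ = (∑' i, ω.aP i ^ 2) + ∑' i, ω.aM i ^ 2 := by
    rw [Summable.tsum_sum (f := fun j => ω.signedAlpha j ^ 2) ω.summable_aP_sq
      ω.summable_neg_aM_sq]
    simp only [signedAlpha, Sum.elim_inl, Sum.elim_inr, neg_sq]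
  _ ≤ ω.del := ω.sum_sq_le

lemma Eomega_eq (ω : OmegaHat) (z : ℂ) :
    Eomega ω z = ω.gaussFactor z * ∏' j, weierstrassFactor₂ (z * ω.signedAlpha j) := by
  have hM : (fun i => cexp (-(z * ω.aM i)) * (1 + z * ω.aM i)) =
      fun i => cexp (z * ↑(-ω.aM i)) * (1 - z * ↑(-ω.aM i)) := by
    ext i; push_cast; ring_nf
  rw [Eomega, (hasProd_cexp_mul_one_sub z ω.summable_aP_sq).tprod_eq, hM,
    (hasProd_cexp_mul_one_sub z ω.summable_neg_aM_sq).tprod_eq,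
    Multipliable.tprod_sum (f := fun j => weierstrassFactor₂ (z * ω.signedAlpha j))
      (multipliable_weierstrassFactor₂_mul z ω.summable_aP_sq)
      (multipliable_weierstrassFactor₂_mul z ω.summable_neg_aM_sq)]
  simp only [signedAlpha, Sum.elim_inl, Sum.elim_inr, neg_sq, gaussFactor]
  have hexp : cexp (-ω.g1 * z - (gamma2 ω : ℂ) / 2 * z ^ 2) *
      cexp (-(z ^ 2 / 2 * ↑(∑' i, ω.aP i ^ 2))) * cexp (-(z ^ 2 / 2 * ↑(∑' i, ω.aM i ^ 2))) =
      cexp (-ω.g1 * z - ω.del / 2 * z ^ 2) := by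
    rw [← Complex.exp_add, ← Complex.exp_add, gamma2]
    push_cast; ring_nf
  rw [← hexp]
  ring

lemma tendsto_partialE (ω : OmegaHat) (z : ℂ) :
    Tendsto (ω.partialE z) atTop (𝓝 (Eomega ω z)) := by
  rw [Eomega_eq]
  exact tendsto_const_nhds.mul
    (multipliable_weierstrassFactor₂_mul z ω.summable_signedAlpha_sq).hasProd

lemma norm_gaussFactor_le (ω : OmegaHat) (z : ℂ) :
    ‖ω.gaussFactor z‖ ≤ rexp (|ω.g1| * ‖z‖ + ω.del / 2 * ‖z‖ ^ 2) := by
  refine (Complex.norm_exp_le_exp_norm _).trans (Real.exp_le_exp.2 ?_)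
  simpa [abs_of_nonneg ω.del_nonneg] using norm_neg_mul_sub_div_two_mul_sq_le ω.g1 ω.del z

lemma norm_gaussFactor_sub_le (ω ω' : OmegaHat) (z : ℂ) :
    ‖ω.gaussFactor z - ω'.gaussFactor z‖ ≤ rexp (|ω.g1| * ‖z‖ + ω.del / 2 * ‖z‖ ^ 2) *
      (rexp (|ω.g1 - ω'.g1| * ‖z‖ + |ω.del - ω'.del| / 2 * ‖z‖ ^ 2) - 1) := by
  refine (norm_cexp_sub_cexp_le _ _).trans (mul_le_mul ?_ ?_ ?_ (Real.exp_nonneg _))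
  · exact Real.exp_le_exp.2
      (by simpa [abs_of_nonneg ω.del_nonneg] using norm_neg_mul_sub_div_two_mul_sq_le ω.g1 ω.del z)
  · refine sub_le_sub_right (Real.exp_le_exp.2 ?_) 1
    convert norm_neg_mul_sub_div_two_mul_sq_le (ω.g1 - ω'.g1) (ω.del - ω'.del) z using 2
    push_cast; ring
  · exact sub_nonneg.2 (Real.one_le_exp (norm_nonneg _))

lemma norm_prod_le (ω : OmegaHat) (z : ℂ) (s : Finset (ℕ ⊕ ℕ)) :
    ‖∏ j ∈ s, weierstrassFactor₂ (z * ω.signedAlpha j)‖ ≤ rexp (ω.del * ‖z‖ ^ 2) := by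
  refine (norm_prod_weierstrassFactor₂_le s _).trans (Real.exp_le_exp.2 ?_)
  simp only [norm_mul, Complex.norm_real, Real.norm_eq_abs, mul_pow, sq_abs, ← mul_sum]
  rw [mul_comm]
  exact mul_le_mul_of_nonneg_right (ω.sum_signedAlpha_sq_le s) (sq_nonneg _)

lemma sum_abs_signedAlpha_sub_pow_three_le (ω ω' : OmegaHat) (s : Finset (ℕ ⊕ ℕ)) :
    ∑ j ∈ s, |ω.signedAlpha j - ω'.signedAlpha j| ^ 3 ≤
      ∑' i, (|ω.aP i - ω'.aP i| ^ 3 + |ω.aM i - ω'.aM i| ^ 3) := by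
  have h := summable_abs_sub_pow_three ω.summable_signedAlpha_sq ω'.summable_signedAlpha_sq
  refine (h.sum_le_tsum s fun _ _ => by positivity).trans_eq ?_
  have hl : Summable fun i => |ω.signedAlpha (.inl i) - ω'.signedAlpha (.inl i)| ^ 3 :=
    h.comp_injective Sum.inl_injective
  have hr : Summable fun i => |ω.signedAlpha (.inr i) - ω'.signedAlpha (.inr i)| ^ 3 :=
    h.comp_injective Sum.inr_injective
  rw [Summable.tsum_sum (f := fun j => |ω.signedAlpha j - ω'.signedAlpha j| ^ 3) hl hr,
    ← hl.tsum_add hr]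
  congr 1 with i
  simp only [signedAlpha, Sum.elim_inl, Sum.elim_inr, neg_sub_neg, abs_sub_comm (ω'.aM i)]

lemma norm_prod_sub_prod_le (ω ω' : OmegaHat) (z : ℂ) (s : Finset (ℕ ⊕ ℕ)) :
    ‖∏ j ∈ s, weierstrassFactor₂ (z * ω.signedAlpha j) -
        ∏ j ∈ s, weierstrassFactor₂ (z * ω'.signedAlpha j)‖ ≤
      ‖z‖ * (∑' i, (|ω.aP i - ω'.aP i| ^ 3 + |ω.aM i - ω'.aM i| ^ 3)) ^ (1 / 3 : ℝ) *
        rexp ((‖z‖ * (√ω.del + √ω'.del) + 1) ^ 3) := by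
  have hnorm : ∀ x : ℝ, ‖z * x‖ ^ 2 = ‖z‖ ^ 2 * x ^ 2 := fun x => by
    rw [norm_mul, Complex.norm_real, Real.norm_eq_abs, mul_pow, sq_abs]
  have hsum : ∑ j ∈ s, (‖z * ω.signedAlpha j‖ ^ 2 + ‖z * ω'.signedAlpha j‖ ^ 2) ≤
      (‖z‖ * (√ω.del + √ω'.del)) ^ 2 := by
    simp only [hnorm, ← mul_add, ← mul_sum, mul_pow]
    gcongr
    rw [sum_add_distrib]
    have := ω.sum_signedAlpha_sq_le s
    have := ω'.sum_signedAlpha_sq_le s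
    nlinarith [Real.sq_sqrt ω.del_nonneg, Real.sq_sqrt ω'.del_nonneg,
      mul_nonneg (Real.sqrt_nonneg ω.del) (Real.sqrt_nonneg ω'.del)]
  refine (norm_prod_weierstrassFactor₂_sub_le s _ _ (by positivity) hsum).trans ?_
  gcongr
  have hcube : ∑ j ∈ s, ‖z * ω.signedAlpha j - z * ω'.signedAlpha j‖ ^ 3 =
      ‖z‖ ^ 3 * ∑ j ∈ s, |ω.signedAlpha j - ω'.signedAlpha j| ^ 3 := by
    rw [mul_sum]
    refine sum_congr rfl fun j _ => ?_
    rw [← mul_sub, ← Complex.ofReal_sub, norm_mul, Complex.norm_real, Real.norm_eq_abs, mul_pow]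
  rw [hcube, Real.mul_rpow (by positivity) (sum_nonneg fun _ _ => by positivity),
    ← Real.rpow_natCast, ← Real.rpow_mul (norm_nonneg z),
    show ((3 : ℕ) : ℝ) * (1 / 3) = 1 by norm_num, Real.rpow_one]
  gcongr
  exact sum_abs_signedAlpha_sub_pow_three_le ω ω' s

lemma norm_partialE_sub_le (ω ω' : OmegaHat) (z : ℂ) (s : Finset (ℕ ⊕ ℕ)) :
    ‖ω.partialE z s - ω'.partialE z s‖ ≤
      rexp (|ω.g1| * ‖z‖ + 5 * ω.del * ‖z‖ ^ 2) *
        (rexp (|ω.g1 - ω'.g1| * ‖z‖ + |ω.del - ω'.del| / 2 * ‖z‖ ^ 2) - 1)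
      + ‖z‖ * (∑' i, (|ω.aP i - ω'.aP i| ^ 3 + |ω.aM i - ω'.aM i| ^ 3)) ^ (1 / 3 : ℝ) *
          rexp (|ω'.g1| * ‖z‖ + ω'.del / 2 * ‖z‖ ^ 2 + (‖z‖ * (√ω.del + √ω'.del) + 1) ^ 3) := by
  set P := ∏ j ∈ s, weierstrassFactor₂ (z * ω.signedAlpha j)
  set P' := ∏ j ∈ s, weierstrassFactor₂ (z * ω'.signedAlpha j)
  have hsplit : ω.partialE z s - ω'.partialE z s =
      (ω.gaussFactor z - ω'.gaussFactor z) * P + ω'.gaussFactor z * (P - P') := by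
    simp only [partialE, P, P']; ring
  have hΔ : 0 ≤ rexp (|ω.g1 - ω'.g1| * ‖z‖ + |ω.del - ω'.del| / 2 * ‖z‖ ^ 2) - 1 :=
    sub_nonneg.2 (Real.one_le_exp (by positivity))
  have hexp : rexp (|ω.g1| * ‖z‖ + ω.del / 2 * ‖z‖ ^ 2) * rexp (ω.del * ‖z‖ ^ 2) ≤
      rexp (|ω.g1| * ‖z‖ + 5 * ω.del * ‖z‖ ^ 2) := by
    rw [← Real.exp_add]
    exact Real.exp_le_exp.2 (by nlinarith [mul_nonneg ω.del_nonneg (sq_nonneg ‖z‖)])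
  rw [hsplit, Real.exp_add (|ω'.g1| * ‖z‖ + ω'.del / 2 * ‖z‖ ^ 2)]
  refine (norm_add_le _ _).trans (add_le_add ?_ ?_) <;> rw [norm_mul]
  · calc _ ≤ rexp (|ω.g1| * ‖z‖ + ω.del / 2 * ‖z‖ ^ 2) *
          (rexp (|ω.g1 - ω'.g1| * ‖z‖ + |ω.del - ω'.del| / 2 * ‖z‖ ^ 2) - 1) *
            rexp (ω.del * ‖z‖ ^ 2) :=
          mul_le_mul (norm_gaussFactor_sub_le ω ω' z) (ω.norm_prod_le z s) (norm_nonneg _)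
            (by positivity)
      _ ≤ _ := by
        rw [mul_right_comm]
        exact mul_le_mul_of_nonneg_right hexp hΔ
  · calc _ ≤ rexp (|ω'.g1| * ‖z‖ + ω'.del / 2 * ‖z‖ ^ 2) *
          (‖z‖ * (∑' i, (|ω.aP i - ω'.aP i| ^ 3 + |ω.aM i - ω'.aM i| ^ 3)) ^ (1 / 3 : ℝ) *
            rexp ((‖z‖ * (√ω.del + √ω'.del) + 1) ^ 3)) :=
          mul_le_mul (ω'.norm_gaussFactor_le z) (norm_prod_sub_prod_le ω ω' z s) (norm_nonneg _)
            (Real.exp_nonneg _)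
      _ = _ := by ring

end OmegaHat

/-- quantitative comparison of E_ω and E_ω̃: there is an absolute
constant L > 0 such that for all ω, ω̃ ∈ Ω̂ and z ∈ ℂ the stated bound holds. -/
theorem stmt9 : ∃ L : ℝ, 0 < L ∧ ∀ (ω ω' : OmegaHat) (z : ℂ),
    ‖Eomega ω z - Eomega ω' z‖ ≤
      Real.exp (|ω.g1| * ‖z‖ + 5 * ω.del * ‖z‖ ^ 2) *
        (Real.exp (|ω.g1 - ω'.g1| * ‖z‖ +
          |ω.del - ω'.del| / 2 * ‖z‖ ^ 2) - 1)
      + ‖z‖ *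
          (∑' i, (|ω.aP i - ω'.aP i| ^ 3 + |ω.aM i - ω'.aM i| ^ 3)) ^ ((1 : ℝ) / 3) *
          Real.exp (|ω'.g1| * ‖z‖ + ω'.del / 2 * ‖z‖ ^ 2 +
            L * (‖z‖ * (Real.sqrt ω.del + Real.sqrt ω'.del) + 1) ^ 3) := by
  refine ⟨1, one_pos, fun ω ω' z => ?_⟩
  refine le_of_tendsto' ((ω.tendsto_partialE z).sub (ω'.tendsto_partialE z)).norm fun s => ?_
  simpa only [one_mul] using ω.norm_partialE_sub_le ω' z s
end

section
/- Let ω = (α⁺, α⁻, γ₁, δ) ∈ Ω̂ and define f_ω(z) = ∏_{i=1}^∞ (1 − zα_i⁺) e^{zα_i⁺ + (z²/2)(α_i⁺)²} ∏_{i=1}^∞ (1 + zα_i⁻) e^{−zα_i⁻ + (z²/2)(α_i⁻)²}. Then for every z ∈ ℂ, |f_ω(z)| ≤ e^{(9/2) δ |z|²}. -/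
open Filter Topology Finset

/-- f_ω(z) = ∏ (1 − zα_i⁺) e^{zα_i⁺ + (z²/2)(α_i⁺)²} ∏ (1 + zα_i⁻) e^{−zα_i⁻ + (z²/2)(α_i⁻)²}. -/
noncomputable def fOmega (ω : OmegaHat) (z : ℂ) : ℂ :=
  (∏' i, ((1 - z * (ω.aP i : ℂ)) *
    Complex.exp (z * (ω.aP i : ℂ) + z ^ 2 / 2 * ((ω.aP i : ℂ)) ^ 2))) *
  (∏' i, ((1 + z * (ω.aM i : ℂ)) *
    Complex.exp (-(z * (ω.aM i : ℂ)) + z ^ 2 / 2 * ((ω.aM i : ℂ)) ^ 2)))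

/- Each factor is a Weierstrass factor with its Taylor polynomial completed to second order, and
`|(1 - w) e^{w + w²/2}| ≤ e^{|w|²}` follows from `|1 - w|² = 1 - 2 Re w + |w|² ≤ e^{-2 Re w + |w|²}`
and `Re (w²) ≤ |w|²`. Multiplying over all factors bounds `|f_ω(z)|` by
`exp (|z|² (∑ (α_i⁺)² + ∑ (α_i⁻)²)) ≤ e^{δ |z|²}`. -/

namespace Complex

lemma norm_one_sub_le_exp (w : ℂ) : ‖1 - w‖ ≤ Real.exp (-w.re + ‖w‖ ^ 2 / 2) := by
  have hsq : ‖1 - w‖ ^ 2 = 1 - 2 * w.re + ‖w‖ ^ 2 := by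
    simp only [Complex.sq_norm, normSq_apply, sub_re, sub_im, one_re, one_im]
    ring
  rw [← pow_le_pow_iff_left₀ (norm_nonneg _) (Real.exp_nonneg _) two_ne_zero, hsq]
  calc 1 - 2 * w.re + ‖w‖ ^ 2 ≤ Real.exp (-2 * w.re + ‖w‖ ^ 2) := by
        linarith [Real.add_one_le_exp (-2 * w.re + ‖w‖ ^ 2)]
    _ = Real.exp (-w.re + ‖w‖ ^ 2 / 2) ^ 2 := by rw [← Real.exp_nat_mul]; ring_nf

lemma norm_exp_add_sq_div_two_le (w : ℂ) :
    ‖exp (w + w ^ 2 / 2)‖ ≤ Real.exp (w.re + ‖w‖ ^ 2 / 2) := by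
  have hre : (w ^ 2).re ≤ ‖w‖ ^ 2 := norm_pow w 2 ▸ re_le_norm (w ^ 2)
  rw [norm_exp]
  gcongr
  simp only [add_re, div_ofNat_re]
  linarith

lemma norm_one_sub_mul_exp_le (w : ℂ) :
    ‖(1 - w) * exp (w + w ^ 2 / 2)‖ ≤ Real.exp (‖w‖ ^ 2) := by
  calc ‖(1 - w) * exp (w + w ^ 2 / 2)‖
      ≤ Real.exp (-w.re + ‖w‖ ^ 2 / 2) * Real.exp (w.re + ‖w‖ ^ 2 / 2) := by
        rw [norm_mul]
        exact mul_le_mul (norm_one_sub_le_exp w) (norm_exp_add_sq_div_two_le w)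
          (norm_nonneg _) (Real.exp_nonneg _)
    _ = Real.exp (‖w‖ ^ 2) := by rw [← Real.exp_add]; ring_nf

end Complex

lemma norm_tprod_le_exp_tsum {ι R : Type*} [NormedCommRing R] [NormOneClass R]
    {g : ι → R} {c : ι → ℝ} (hc : ∀ i, 0 ≤ c i) (hsum : Summable c)
    (h : ∀ i, ‖g i‖ ≤ Real.exp (c i)) :
    ‖∏' i, g i‖ ≤ Real.exp (∑' i, c i) := by
  by_cases hm : Multipliable g
  · refine le_of_tendsto ((continuous_norm.tendsto _).comp hm.hasProd) (Eventually.of_forall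
      fun s => ?_)
    calc ‖∏ i ∈ s, g i‖ ≤ ∏ i ∈ s, ‖g i‖ := norm_prod_le _ _
      _ ≤ ∏ i ∈ s, Real.exp (c i) := prod_le_prod (fun i _ => norm_nonneg _) (fun i _ => h i)
      _ = Real.exp (∑ i ∈ s, c i) := (Real.exp_sum s c).symm
      _ ≤ Real.exp (∑' i, c i) := Real.exp_le_exp.mpr (hsum.sum_le_tsum s fun i _ => hc i)
  · rw [tprod_eq_one_of_not_multipliable hm, norm_one]
    exact Real.one_le_exp (tsum_nonneg hc)

noncomputable def gaussianCanonicalProduct (a : ℕ → ℝ) (z : ℂ) : ℂ :=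
  ∏' i, (1 - z * a i) * Complex.exp (z * a i + z ^ 2 / 2 * (a i : ℂ) ^ 2)

lemma norm_gaussianCanonicalProduct_le {a : ℕ → ℝ} (ha : Summable fun i => a i ^ 2) (z : ℂ) :
    ‖gaussianCanonicalProduct a z‖ ≤ Real.exp (‖z‖ ^ 2 * ∑' i, a i ^ 2) := by
  have hnorm : ∀ i, ‖z * a i‖ ^ 2 = ‖z‖ ^ 2 * a i ^ 2 := fun i => by
    rw [norm_mul, Complex.norm_real, Real.norm_eq_abs, mul_pow, sq_abs]
  rw [← tsum_mul_left]
  refine norm_tprod_le_exp_tsum (fun i => by positivity) (ha.mul_left _) fun i => ?_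
  have hfactor : z * a i + z ^ 2 / 2 * (a i : ℂ) ^ 2 = z * a i + (z * a i) ^ 2 / 2 := by ring
  rw [hfactor, ← hnorm]
  exact Complex.norm_one_sub_mul_exp_le (z * a i)

lemma fOmega_eq_mul (ω : OmegaHat) (z : ℂ) :
    fOmega ω z = gaussianCanonicalProduct ω.aP z * gaussianCanonicalProduct ω.aM (-z) := by
  unfold fOmega gaussianCanonicalProduct
  congr 2 with i
  ring_nf

/-- |f_ω(z)| ≤ e^{(9/2) δ |z|²} for every z ∈ ℂ. -/
theorem stmt10 (ω : OmegaHat) (z : ℂ) :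
    ‖fOmega ω z‖ ≤ Real.exp (9 / 2 * ω.del * ‖z‖ ^ 2) := by
  have hsum : ‖z‖ ^ 2 * ((∑' i, ω.aP i ^ 2) + ∑' i, ω.aM i ^ 2) ≤ 9 / 2 * ω.del * ‖z‖ ^ 2 := by
    nlinarith [ω.sum_sq_le, ω.del_nonneg, sq_nonneg ‖z‖]
  calc ‖fOmega ω z‖
      ≤ Real.exp (‖z‖ ^ 2 * ∑' i, ω.aP i ^ 2) * Real.exp (‖-z‖ ^ 2 * ∑' i, ω.aM i ^ 2) := by
        rw [fOmega_eq_mul, norm_mul]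
        exact mul_le_mul (norm_gaussianCanonicalProduct_le ω.summable_aP_sq z)
          (norm_gaussianCanonicalProduct_le ω.summable_aM_sq (-z)) (norm_nonneg _)
          (Real.exp_nonneg _)
    _ ≤ Real.exp (9 / 2 * ω.del * ‖z‖ ^ 2) := by
        rw [norm_neg, ← Real.exp_add, ← mul_add]
        exact Real.exp_le_exp.mpr hsum
end

section
/- Let ω = (α⁺, α⁻, γ₁, δ) ∈ Ω̂ and suppose that γ₂ = 0 and γ₁ = lim_{R→∞} (∑_{i : α_i⁺ > R^{−2}} α_i⁺ − ∑_{i : α_i⁻ > R^{−2}} α_i⁻) (a principal value sum). Then for every z ∈ ℂ, E_ω(z) = lim_{R→∞} ∏_{i : α_i⁺ > R^{−2}} (1 − α_i⁺ z) · ∏_{i : α_i⁻ > R^{−2}} (1 + α_i⁻ z). -/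
/-!
Write `1 - w = exp (-w) * E₁ w` with the elementary factor `E₁ w = exp w * (1 - w)`. The truncated
product over `{i | α_i^± > t}` is then `exp (-z (∑ α_i⁺ - ∑ α_i⁻))` times the corresponding truncated
product of the factors `E₁ (± z α_i^±)`. Since `‖E₁ w - 1‖ ≤ 3 ‖w‖²` for `‖w‖ ≤ 1` and
`∑ (α_i^±)² < ∞`, the product of the `E₁ (± z α_i^±)` converges unconditionally, so its
truncations converge to it as `t → 0⁺`; the principal value hypothesis handles the exponential,
and `γ₂ = 0` removes the Gaussian factor of `E_ω`.
-/

open Filter Topology Finset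

section TruncatedProducts

variable {ι β α : Type*} [CommMonoid α] [TopologicalSpace α]

@[to_additive]
theorem tprod_ite_eq_prod_toFinset {p : ι → Prop} [DecidablePred p] (hp : {i | p i}.Finite)
    (f : ι → α) : ∏' i, (if p i then f i else 1) = ∏ i ∈ hp.toFinset, f i := by
  rw [tprod_eq_prod (s := hp.toFinset) fun i hi => if_neg (by simpa using hi)]
  exact prod_congr rfl fun i hi => if_pos (by simpa using hi)

theorem HasProd.tendsto_tprod_ite {f : ι → α} {a : α} (hf : HasProd f a) {l : Filter β}
    {p : β → ι → Prop} [∀ b, DecidablePred (p b)] (hfin : ∀ᶠ b in l, {i | p b i}.Finite)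
    (hp : ∀ i, f i ≠ 1 → ∀ᶠ b in l, p b i) :
    Tendsto (fun b => ∏' i, if p b i then f i else 1) l (𝓝 a) := by
  classical
  refine tendsto_iff_forall_eventually_mem.2 fun U hU => ?_
  obtain ⟨s₀, hs₀⟩ := mem_atTop_sets.1 (hf hU)
  have hmem : ∀ᶠ b in l, ∀ i ∈ s₀.filter (f · ≠ 1), p b i :=
    (eventually_all_finset _).2 fun i hi => hp i (mem_filter.1 hi).2
  filter_upwards [hfin, hmem] with b hb hbs₀
  rw [tprod_ite_eq_prod_toFinset hb]
  -- adding the indices of `s₀` where `f = 1` leaves the product unchanged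
  have hunion : ∏ i ∈ hb.toFinset, f i = ∏ i ∈ hb.toFinset ∪ s₀, f i := by
    refine prod_subset subset_union_left fun i hi hni => by_contra fun h => hni ?_
    simpa using hbs₀ i (mem_filter.2 ⟨(mem_union.1 hi).resolve_left hni, h⟩)
  exact hunion ▸ hs₀ _ subset_union_right

end TruncatedProducts

section ElementaryFactor

variable {ι : Type*}

theorem Filter.Tendsto.finite_setOf_lt {a : ι → ℝ} (ha : Tendsto a cofinite (𝓝 0))
    {t : ℝ} (ht : 0 < t) : {i | t < a i}.Finite :=
  (eventually_cofinite.1 (ha.eventually (gt_mem_nhds ht))).subset fun _ hi => lt_asymm hi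

theorem Summable.tendsto_cofinite_zero_of_sq {a : ι → ℝ}
    (ha : Summable fun i => a i ^ 2) : Tendsto a cofinite (𝓝 0) := by
  have h := (Real.continuous_sqrt.tendsto 0).comp ha.tendsto_cofinite_zero
  simp only [Function.comp_def, Real.sqrt_sq_eq_abs, Real.sqrt_zero] at h
  exact (tendsto_zero_iff_abs_tendsto_zero a).2 h

noncomputable def elementaryFactorOne (w : ℂ) : ℂ := Complex.exp w * (1 - w)

theorem norm_elementaryFactorOne_sub_one_le {w : ℂ} (hw : ‖w‖ ≤ 1) :
    ‖elementaryFactorOne w - 1‖ ≤ 3 * ‖w‖ ^ 2 := by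
  have h₁ : ‖Complex.exp w - 1 - w‖ ≤ ‖w‖ ^ 2 := Complex.norm_exp_sub_one_sub_id_le hw
  have h₂ : ‖Complex.exp w - 1‖ ≤ 2 * ‖w‖ := Complex.norm_exp_sub_one_le hw
  calc ‖elementaryFactorOne w - 1‖ = ‖(Complex.exp w - 1 - w) - w * (Complex.exp w - 1)‖ := by
        rw [elementaryFactorOne]; ring_nf
    _ ≤ ‖Complex.exp w - 1 - w‖ + ‖w‖ * ‖Complex.exp w - 1‖ := by
        rw [← norm_mul]; exact norm_sub_le _ _
    _ ≤ ‖w‖ ^ 2 + ‖w‖ * (2 * ‖w‖) := by gcongr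
    _ = 3 * ‖w‖ ^ 2 := by ring

theorem multipliable_elementaryFactorOne {a : ι → ℝ}
    (ha : Summable fun i => a i ^ 2) (c : ℂ) :
    Multipliable fun i => elementaryFactorOne (c * a i) := by
  have hsmall : ∀ᶠ i in cofinite, ‖c * a i‖ ≤ 1 := by
    have h := ha.tendsto_cofinite_zero_of_sq.norm.const_mul ‖c‖
    rw [norm_zero, mul_zero] at h
    filter_upwards [h.eventually_le_const one_pos] with i hi
    rwa [norm_mul, Complex.norm_real]
  have hsum : Summable fun i => elementaryFactorOne (c * a i) - 1 := by
    refine (ha.mul_left (3 * ‖c‖ ^ 2)).of_norm_bounded_eventually ?_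
    filter_upwards [hsmall] with i hi
    calc ‖elementaryFactorOne (c * a i) - 1‖ ≤ 3 * ‖c * a i‖ ^ 2 :=
          norm_elementaryFactorOne_sub_one_le hi
      _ = 3 * ‖c‖ ^ 2 * a i ^ 2 := by
          rw [norm_mul, Complex.norm_real, Real.norm_eq_abs, mul_pow, sq_abs, mul_assoc]
  simpa using Complex.multipliable_one_add_of_summable hsum

theorem prod_elementaryFactorOne (s : Finset ι) (w : ι → ℂ) :
    ∏ i ∈ s, elementaryFactorOne (w i) = Complex.exp (∑ i ∈ s, w i) * ∏ i ∈ s, (1 - w i) := by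
  simp only [elementaryFactorOne, prod_mul_distrib, Complex.exp_sum]

theorem tendsto_exp_mul_truncated_prod {a : ι → ℝ} (ha₀ : ∀ i, 0 ≤ a i)
    (ha : Summable fun i => a i ^ 2) (c : ℂ) :
    Tendsto (fun t : ℝ => Complex.exp (c * ∑' i, if t < a i then a i else 0) *
        ∏' i, if t < a i then 1 - a i * c else 1)
      (𝓝[>] 0) (𝓝 (∏' i, elementaryFactorOne (c * a i))) := by
  have hfin : ∀ᶠ t in 𝓝[>] (0 : ℝ), {i | t < a i}.Finite :=
    eventually_mem_nhdsWithin.mono fun t ht => ha.tendsto_cofinite_zero_of_sq.finite_setOf_lt ht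
  have hmem (i) (hi : elementaryFactorOne (c * a i) ≠ 1) : ∀ᶠ t in 𝓝[>] (0 : ℝ), t < a i := by
    have hai : 0 < a i := (ha₀ i).lt_of_ne' fun h => hi (by simp [h, elementaryFactorOne])
    exact nhdsWithin_le_nhds (eventually_lt_nhds hai)
  refine ((multipliable_elementaryFactorOne ha c).hasProd.tendsto_tprod_ite hfin hmem).congr' ?_
  filter_upwards [hfin] with t ht
  rw [tprod_ite_eq_prod_toFinset ht, tsum_ite_eq_sum_toFinset ht, tprod_ite_eq_prod_toFinset ht,
    prod_elementaryFactorOne]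
  push_cast
  simp only [mul_comm c, sum_mul]

end ElementaryFactor

/-- if γ₂ = 0 and γ₁ is the principal value sum
lim_{R→∞} (∑_{α_i⁺ > R⁻²} α_i⁺ − ∑_{α_i⁻ > R⁻²} α_i⁻), then for every z ∈ ℂ,
E_ω(z) = lim_{R→∞} ∏_{α_i⁺ > R⁻²} (1 − α_i⁺ z) ∏_{α_i⁻ > R⁻²} (1 + α_i⁻ z).
(Only finitely many indices satisfy α_i^± > R⁻², so the truncated sums and
products, written here as tsums/tprods of terms that are 0 resp. 1 off a finite
set, are really finite.) -/
theorem stmt17 (ω : OmegaHat) (hg2 : gamma2 ω = 0)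
    (hg1 : Filter.Tendsto
      (fun R : ℝ =>
        (∑' i, if R⁻¹ ^ 2 < ω.aP i then ω.aP i else 0) -
        (∑' i, if R⁻¹ ^ 2 < ω.aM i then ω.aM i else 0))
      Filter.atTop (nhds ω.g1)) :
    ∀ z : ℂ, Filter.Tendsto
      (fun R : ℝ =>
        (∏' i, if R⁻¹ ^ 2 < ω.aP i then 1 - (ω.aP i : ℂ) * z else 1) *
        (∏' i, if R⁻¹ ^ 2 < ω.aM i then 1 + (ω.aM i : ℂ) * z else 1))
      Filter.atTop (nhds (Eomega ω z)) := by
  intro z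
  have hR : Tendsto (fun R : ℝ => R⁻¹ ^ 2) atTop (𝓝[>] 0) := by
    refine tendsto_nhdsWithin_iff.2 ⟨by simpa using (tendsto_inv_atTop_zero (𝕜 := ℝ)).pow 2, ?_⟩
    filter_upwards [eventually_gt_atTop 0] with R hR
    exact Set.mem_Ioi.2 (by positivity)
  have hP := (tendsto_exp_mul_truncated_prod ω.aP_nonneg ω.summable_aP_sq z).comp hR
  have hM := (tendsto_exp_mul_truncated_prod ω.aM_nonneg ω.summable_aM_sq (-z)).comp hR
  have hexp := ((by fun_prop : Continuous fun x : ℝ => Complex.exp (-(z * x))).tendsto _).comp hg1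
  have hE : Eomega ω z = Complex.exp (-(z * ω.g1)) *
      ((∏' i, elementaryFactorOne (z * ω.aP i)) * ∏' i, elementaryFactorOne (-z * ω.aM i)) := by
    simp only [Eomega, hg2, elementaryFactorOne, neg_mul, sub_neg_eq_add]
    push_cast
    ring_nf
  rw [hE]
  refine (hexp.mul (hP.mul hM)).congr fun R => ?_
  simp only [Function.comp_apply, mul_neg, sub_neg_eq_add]
  rw [mul_mul_mul_comm, ← mul_assoc, ← Complex.exp_add, ← Complex.exp_add]
  convert one_mul _
  rw [← Complex.exp_zero]
  push_cast
  ring_nf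
end
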